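/- For every ν < 0 and every real x, the strict Turán-type inequality H_{ν−1}(x)² − H_ν(x)·H_{ν−2}(x) > 0 holds for Hermite functions of negative degree. -/

import Mathlib

/-!
Write `y = x √2` and `F k y = ∫₀^∞ t ^ k exp (-t ^ 2 / 2 - y t) dt`, so that
`H μ x = 2 ^ (μ / 2) F (-μ - 1) y / Γ(-μ)`. With `a = -ν > 0` and `Γ(a + 1) = a Γ(a)` the claim
becomes `a F (a - 1) F (a + 1) < (a + 1) F a ^ 2`. Integration by parts gives the recurrence
`F (k + 2) + y F (k + 1) = (k + 1) F k`; applied at `k = a - 1` and `k = a` it turns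
`(a + 1) F a ^ 2 - a F (a - 1) F (a + 1)` into `F a F (a + 2) - F (a + 1) ^ 2`, which is positive
by the strict Cauchy–Schwarz inequality for the moments of the positive weight `exp (-t ^ 2 / 2 - y t)`.
-/

open MeasureTheory Real Filter

noncomputable def G (ν x : ℝ) : ℝ :=
  ∫ t in Set.Ioi (0:ℝ), t ^ (-ν - 1) * Real.exp (-t^2/2 - x*t)

noncomputable def D (ν x : ℝ) : ℝ :=
  Real.exp (-x^2/4) / Real.Gamma (-ν) * G ν x

noncomputable def H (ν x : ℝ) : ℝ :=
  (2:ℝ) ^ (ν / 2) * Real.exp (x^2 / 2) * D ν (x * Real.sqrt 2)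

open Topology

theorem MeasureTheory.integral_pos_of_ae_pos {α : Type*} [MeasurableSpace α] {μ : Measure α}
    (hμ : μ ≠ 0) {f : α → ℝ} (hf : Integrable f μ) (hpos : ∀ᵐ x ∂μ, 0 < f x) :
    0 < ∫ x, f x ∂μ := by
  have := ae_neBot.2 hμ
  refine (integral_pos_iff_support_of_nonneg_ae (hpos.mono fun _ h => h.le) hf).2 ?_
  refine pos_iff_ne_zero.2 fun h0 => ?_
  obtain ⟨x, hx, hx0⟩ := (hpos.and (measure_eq_zero_iff_ae_notMem.1 h0)).exists
  exact hx0 hx.ne'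

lemma exp_neg_sq_div_two_sub_mul_le (y t : ℝ) :
    exp (-t ^ 2 / 2 - y * t) ≤ exp ((1 - y) ^ 2 / 2) * exp (-t) := by
  rw [← exp_add]
  exact exp_le_exp.2 (by nlinarith [sq_nonneg (t - (1 - y))])

lemma integrableOn_rpow_mul_exp_neg_sq_div_two_sub_mul {k : ℝ} (hk : -1 < k) (y : ℝ) :
    IntegrableOn (fun t => t ^ k * exp (-t ^ 2 / 2 - y * t)) (Set.Ioi 0) := by
  have hΓ := (GammaIntegral_convergent (s := k + 1) (by linarith)).const_mul (exp ((1 - y) ^ 2 / 2))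
  refine hΓ.mono' ?_ ?_
  · exact (ContinuousOn.mul (fun t ht => (continuousAt_rpow_const t k
      (Or.inl ht.ne')).continuousWithinAt) (by fun_prop)).aestronglyMeasurable measurableSet_Ioi
  · filter_upwards [ae_restrict_mem measurableSet_Ioi] with t (ht : 0 < t)
    rw [norm_of_nonneg (by positivity), add_sub_cancel_right]
    calc t ^ k * exp (-t ^ 2 / 2 - y * t) ≤ t ^ k * (exp ((1 - y) ^ 2 / 2) * exp (-t)) :=
          mul_le_mul_of_nonneg_left (exp_neg_sq_div_two_sub_mul_le y t) (by positivity)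
      _ = exp ((1 - y) ^ 2 / 2) * (exp (-t) * t ^ k) := by ring

noncomputable def gaussMoment (k y : ℝ) : ℝ :=
  ∫ t in Set.Ioi (0 : ℝ), t ^ k * exp (-t ^ 2 / 2 - y * t)

lemma gaussMoment_pos {k : ℝ} (hk : -1 < k) (y : ℝ) : 0 < gaussMoment k y :=
  integral_pos_of_ae_pos (by simp) (integrableOn_rpow_mul_exp_neg_sq_div_two_sub_mul hk y)
    ((ae_restrict_mem measurableSet_Ioi).mono fun t (ht : 0 < t) => by positivity)

lemma rpow_mul_sub_sq_mul {t : ℝ} (ht : 0 < t) (k c w : ℝ) :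
    t ^ k * (t - c) ^ 2 * w = t ^ (k + 2) * w - 2 * c * (t ^ (k + 1) * w) + c ^ 2 * (t ^ k * w) := by
  rw [rpow_add ht, rpow_add ht, rpow_two, rpow_one]
  ring

lemma integrableOn_rpow_mul_sub_sq_mul_exp {k : ℝ} (hk : -1 < k) (y c : ℝ) :
    IntegrableOn (fun t => t ^ k * (t - c) ^ 2 * exp (-t ^ 2 / 2 - y * t)) (Set.Ioi 0) := by
  have h0 := integrableOn_rpow_mul_exp_neg_sq_div_two_sub_mul hk y
  have h1 := integrableOn_rpow_mul_exp_neg_sq_div_two_sub_mul (k := k + 1) (by linarith) y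
  have h2 := integrableOn_rpow_mul_exp_neg_sq_div_two_sub_mul (k := k + 2) (by linarith) y
  exact ((h2.sub (h1.const_mul (2 * c))).add (h0.const_mul (c ^ 2))).congr_fun
    (fun t ht => (rpow_mul_sub_sq_mul ht k c _).symm) measurableSet_Ioi

lemma integral_rpow_mul_sub_sq_mul_exp {k : ℝ} (hk : -1 < k) (y c : ℝ) :
    ∫ t in Set.Ioi (0 : ℝ), t ^ k * (t - c) ^ 2 * exp (-t ^ 2 / 2 - y * t)
      = gaussMoment (k + 2) y - 2 * c * gaussMoment (k + 1) y + c ^ 2 * gaussMoment k y := by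
  have h0 := integrableOn_rpow_mul_exp_neg_sq_div_two_sub_mul hk y
  have h1 := integrableOn_rpow_mul_exp_neg_sq_div_two_sub_mul (k := k + 1) (by linarith) y
  have h2 := integrableOn_rpow_mul_exp_neg_sq_div_two_sub_mul (k := k + 2) (by linarith) y
  rw [setIntegral_congr_fun measurableSet_Ioi fun t ht => rpow_mul_sub_sq_mul ht k c _,
    integral_add, integral_sub, integral_const_mul, integral_const_mul]
  exacts [rfl, h2, h1.const_mul _, h2.sub (h1.const_mul _), h0.const_mul _]

lemma gaussMoment_sq_lt_mul {k : ℝ} (hk : -1 < k) (y : ℝ) :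
    gaussMoment (k + 1) y ^ 2 < gaussMoment k y * gaussMoment (k + 2) y := by
  have hF := gaussMoment_pos hk y
  -- Strict Cauchy–Schwarz, via the discriminant of `c ↦ ∫ t ^ k (t - c) ^ 2 exp (-t ^ 2 / 2 - y t)`.
  have hquad (c : ℝ) :
      0 < gaussMoment (k + 2) y - 2 * c * gaussMoment (k + 1) y + c ^ 2 * gaussMoment k y := by
    rw [← integral_rpow_mul_sub_sq_mul_exp hk]
    refine integral_pos_of_ae_pos (by simp) (integrableOn_rpow_mul_sub_sq_mul_exp hk y c) ?_
    filter_upwards [ae_restrict_mem measurableSet_Ioi, ae_restrict_of_ae (Measure.ae_ne volume c)]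
      with t (ht : 0 < t) htc
    have : t - c ≠ 0 := sub_ne_zero.2 htc
    positivity
  have hmin := hquad (gaussMoment (k + 1) y / gaussMoment k y)
  field_simp at hmin
  linarith

lemma tendsto_rpow_mul_exp_neg_sq_div_two_sub_mul_atTop (k y : ℝ) :
    Tendsto (fun t => t ^ k * exp (-t ^ 2 / 2 - y * t)) atTop (𝓝 0) := by
  have hlim := (tendsto_rpow_mul_exp_neg_mul_atTop_nhds_zero k 1 one_pos).const_mul
    (exp ((1 - y) ^ 2 / 2))
  rw [mul_zero] at hlim
  refine squeeze_zero' ?_ ?_ hlim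
  · filter_upwards [eventually_gt_atTop 0] with t ht
    positivity
  · filter_upwards [eventually_gt_atTop 0] with t ht
    calc t ^ k * exp (-t ^ 2 / 2 - y * t) ≤ t ^ k * (exp ((1 - y) ^ 2 / 2) * exp (-t)) :=
          mul_le_mul_of_nonneg_left (exp_neg_sq_div_two_sub_mul_le y t) (by positivity)
      _ = exp ((1 - y) ^ 2 / 2) * (t ^ k * exp (-1 * t)) := by ring_nf

lemma hasDerivAt_rpow_add_one_mul_exp {t : ℝ} (ht : 0 < t) (k y : ℝ) :
    HasDerivAt (fun s => s ^ (k + 1) * exp (-s ^ 2 / 2 - y * s))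
      ((k + 1) * (t ^ k * exp (-t ^ 2 / 2 - y * t)) - t ^ (k + 2) * exp (-t ^ 2 / 2 - y * t)
        - y * (t ^ (k + 1) * exp (-t ^ 2 / 2 - y * t))) t := by
  have hpow : HasDerivAt (fun s => s ^ (k + 1)) ((k + 1) * t ^ k) t := by
    simpa using hasDerivAt_rpow_const (x := t) (p := k + 1) (Or.inl ht.ne')
  have hexp : HasDerivAt (fun s => exp (-s ^ 2 / 2 - y * s)) (exp (-t ^ 2 / 2 - y * t) * (-t - y)) t :=
    ((((hasDerivAt_pow 2 t).neg.div_const 2).sub ((hasDerivAt_id t).const_mul y)).congr_deriv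
      (by push_cast; ring)).exp
  refine (hpow.mul hexp).congr_deriv ?_
  rw [rpow_add ht, rpow_add ht, rpow_one, rpow_two]
  ring

lemma gaussMoment_add_two {k : ℝ} (hk : -1 < k) (y : ℝ) :
    gaussMoment (k + 2) y + y * gaussMoment (k + 1) y = (k + 1) * gaussMoment k y := by
  have h0 := integrableOn_rpow_mul_exp_neg_sq_div_two_sub_mul hk y
  have h1 := integrableOn_rpow_mul_exp_neg_sq_div_two_sub_mul (k := k + 1) (by linarith) y
  have h2 := integrableOn_rpow_mul_exp_neg_sq_div_two_sub_mul (k := k + 2) (by linarith) y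
  have hcont : ContinuousWithinAt (fun t => t ^ (k + 1) * exp (-t ^ 2 / 2 - y * t)) (Set.Ici 0) 0 :=
    ((continuousAt_rpow_const 0 (k + 1) (Or.inr (by linarith))).mul (by fun_prop)).continuousWithinAt
  have hparts := integral_Ioi_of_hasDerivAt_of_tendsto hcont
    (fun t ht => hasDerivAt_rpow_add_one_mul_exp ht k y)
    (((h0.const_mul _).sub h2).sub (h1.const_mul _))
    (tendsto_rpow_mul_exp_neg_sq_div_two_sub_mul_atTop (k + 1) y)
  rw [integral_sub, integral_sub, integral_const_mul, integral_const_mul,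
    zero_rpow (by linarith), zero_mul, sub_zero] at hparts
  · unfold gaussMoment
    linarith
  exacts [h0.const_mul _, h2, (h0.const_mul _).sub h2, h1.const_mul _]

lemma gaussMoment_turan {a : ℝ} (ha : 0 < a) (y : ℝ) :
    a * (gaussMoment (a - 1) y * gaussMoment (a + 1) y) < (a + 1) * gaussMoment a y ^ 2 := by
  have hrec₁ := gaussMoment_add_two (k := a - 1) (by linarith) y
  rw [show a - 1 + 2 = a + 1 by ring, sub_add_cancel] at hrec₁
  have hrec₂ := gaussMoment_add_two (k := a) (by linarith) y
  have hcs := gaussMoment_sq_lt_mul (k := a) (by linarith) y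
  calc a * (gaussMoment (a - 1) y * gaussMoment (a + 1) y)
      = gaussMoment (a + 1) y ^ 2 + y * gaussMoment a y * gaussMoment (a + 1) y := by
        linear_combination (-gaussMoment (a + 1) y) * hrec₁
    _ < gaussMoment a y * gaussMoment (a + 2) y + y * gaussMoment a y * gaussMoment (a + 1) y := by
        linarith
    _ = (a + 1) * gaussMoment a y ^ 2 := by linear_combination gaussMoment a y * hrec₂

noncomputable def scaledGaussMoment (k y : ℝ) : ℝ :=
  gaussMoment k y / Gamma (k + 1)

lemma scaledGaussMoment_turan {a : ℝ} (ha : 0 < a) (y : ℝ) :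
    scaledGaussMoment (a - 1) y * scaledGaussMoment (a + 1) y < scaledGaussMoment a y ^ 2 := by
  have hΓ := Gamma_pos_of_pos ha
  have hF := gaussMoment_turan ha y
  rw [scaledGaussMoment, scaledGaussMoment, scaledGaussMoment, sub_add_cancel, Gamma_add_one ha.ne',
    Gamma_add_one (by linarith), Gamma_add_one ha.ne', div_mul_div_comm, div_pow,
    div_lt_div_iff₀ (by positivity) (by positivity)]
  linarith [mul_lt_mul_of_pos_left hF (by positivity : 0 < a * Gamma a ^ 2)]

lemma H_eq_rpow_mul_scaledGaussMoment (μ x : ℝ) :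
    H μ x = 2 ^ (μ / 2) * scaledGaussMoment (-μ - 1) (x * √2) := by
  have hG : G μ (x * √2) = gaussMoment (-μ - 1) (x * √2) := rfl
  have hexp : exp (x ^ 2 / 2) * exp (-(x * √2) ^ 2 / 4) = 1 := by
    rw [← exp_add, mul_pow, sq_sqrt zero_le_two, ← exp_zero]
    ring_nf
  rw [H, D, hG, scaledGaussMoment, sub_add_cancel]
  linear_combination (2 ^ (μ / 2) * (gaussMoment (-μ - 1) (x * √2) / Gamma (-μ))) * hexp

theorem stmt19 (ν : ℝ) (hν : ν < 0) (x : ℝ) :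
    (H (ν - 1) x) ^ 2 - H ν x * H (ν - 2) x > 0 := by
  have hturan := scaledGaussMoment_turan (neg_pos.2 hν) (x * √2)
  have hpow : ((2 : ℝ) ^ ((ν - 1) / 2)) ^ 2 = 2 ^ (ν / 2) * 2 ^ ((ν - 2) / 2) := by
    rw [← rpow_natCast, ← rpow_mul zero_le_two, ← rpow_add two_pos]
    ring_nf
  rw [H_eq_rpow_mul_scaledGaussMoment, H_eq_rpow_mul_scaledGaussMoment,
    H_eq_rpow_mul_scaledGaussMoment, show -(ν - 1) - 1 = -ν by ring,
    show -(ν - 2) - 1 = -ν + 1 by ring, mul_pow, hpow]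
  linarith [mul_lt_mul_of_pos_left hturan (by positivity : (0 : ℝ) < 2 ^ (ν / 2) * 2 ^ ((ν - 2) / 2))]
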